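/- Let (N,W) be a simple game and S₁, S₂ two losing coalitions. There exist winning S₃, S₄ with (S₁,S₂,S₃,S₄) a 2-trade application if and only if the Set Splitting instance with universe U = S₁ ∪ S₂ and family F = { (S₁ ∪ S₂) \ L : L maximal losing, S₁ ∩ S₂ ⊆ L } is a yes-instance, i.e., there is a partition of U into two parts such that every member of F intersects both parts. -/
import Mathlib


/-- Number of occurrences of player `p` in the pair of coalitions `(A, B)`. -/
def cnt {N : Type*} [DecidableEq N] (A B : Finset N) (p : N) : ℕ :=
  (if p ∈ A then 1 else 0) + (if p ∈ B then 1 else 0)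

private lemma exists_maximal_losing {N : Type*} [Fintype N] [DecidableEq N]
    (W : Set (Finset N)) :
    ∀ (n : ℕ) (L : Finset N), (Finset.univ \ L).card ≤ n → L ∉ W →
      ∃ M, L ⊆ M ∧ M ∉ W ∧ ∀ T, M ⊂ T → T ∈ W := by
  intro n
  induction n with
  | zero =>
    intro L hc hL
    refine ⟨L, subset_rfl, hL, fun T hT => ?_⟩
    exfalso
    have hLuniv : L = Finset.univ := by
      have : Finset.univ \ L = ∅ := Finset.card_eq_zero.mp (Nat.le_zero.mp hc)
      have := Finset.sdiff_eq_empty_iff_subset.mp this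
      exact Finset.univ_subset_iff.mp this
    subst hLuniv
    exact hT.2 (Finset.subset_univ T)
  | succ n ih =>
    intro L hc hL
    by_cases h : ∀ T, L ⊂ T → T ∈ W
    · exact ⟨L, subset_rfl, hL, h⟩
    · push_neg at h
      obtain ⟨T, hLT, hT⟩ := h
      have hcT : (Finset.univ \ T).card ≤ n := by
        have h1 : (Finset.univ \ L).card = Fintype.card N - L.card := by
          simp [Finset.card_sdiff_of_subset (Finset.subset_univ L)]
        have h2 : (Finset.univ \ T).card = Fintype.card N - T.card := by
          simp [Finset.card_sdiff_of_subset (Finset.subset_univ T)]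
        have h3 : L.card < T.card := Finset.card_lt_card hLT
        have h4 : T.card ≤ Fintype.card N := by
          simpa using Finset.card_le_card (Finset.subset_univ T)
        omega
      obtain ⟨M, hTM, hM, hmax⟩ := ih T hcT hT
      exact ⟨M, hLT.subset.trans hTM, hM, hmax⟩

/-- There exist winning `S₃, S₄` with `(S₁,S₂,S₃,S₄)` a 2-trade application iff
the Set Splitting instance with universe `S₁ ∪ S₂` and family
`{(S₁ ∪ S₂) \ L : L maximal losing, S₁ ∩ S₂ ⊆ L}` is a yes-instance. -/
theorem two_trade_iff_setSplitting
    {N : Type*} [Fintype N] [DecidableEq N] (W : Set (Finset N))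
    (hfull : Finset.univ ∈ W) (hempty : (∅ : Finset N) ∉ W)
    (hmono : ∀ S T : Finset N, S ∈ W → S ⊆ T → T ∈ W)
    (S1 S2 : Finset N) (h1 : S1 ∉ W) (h2 : S2 ∉ W) :
    (∃ S3 S4 : Finset N, S3 ∈ W ∧ S4 ∈ W ∧
      ∀ p : N, cnt S1 S2 p = cnt S3 S4 p) ↔
    (∃ U1 U2 : Finset N, U1 ∪ U2 = S1 ∪ S2 ∧ U1 ∩ U2 = ∅ ∧
      ∀ L : Finset N, L ∉ W → (∀ T : Finset N, L ⊂ T → T ∈ W) → S1 ∩ S2 ⊆ L →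
        (((S1 ∪ S2) \ L) ∩ U1).Nonempty ∧ (((S1 ∪ S2) \ L) ∩ U2).Nonempty) := by
  constructor
  · rintro ⟨S3, S4, h3, h4, hcnt⟩
    have hu : S3 ∪ S4 = S1 ∪ S2 := by
      ext p
      have h := hcnt p
      simp only [cnt] at h
      by_cases hp1 : p ∈ S1 <;> by_cases hp2 : p ∈ S2 <;>
        by_cases hp3 : p ∈ S3 <;> by_cases hp4 : p ∈ S4 <;> simp_all
    have hi : S3 ∩ S4 = S1 ∩ S2 := by
      ext p
      have h := hcnt p
      simp only [cnt] at h
      by_cases hp1 : p ∈ S1 <;> by_cases hp2 : p ∈ S2 <;>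
        by_cases hp3 : p ∈ S3 <;> by_cases hp4 : p ∈ S4 <;> simp_all
    refine ⟨S3, S4 \ S3, by rw [Finset.union_sdiff_self_eq_union, hu], by simp, ?_⟩
    intro L hL hmax hsub
    constructor
    · by_contra hne
      rw [Finset.not_nonempty_iff_eq_empty] at hne
      have hS3L : S3 ⊆ L := by
        intro x hx
        by_contra hxL
        have hxU : x ∈ S1 ∪ S2 := by
          rw [← hu]; exact Finset.mem_union_left _ hx
        have : x ∈ ((S1 ∪ S2) \ L) ∩ S3 := by
          simp [hxU, hxL, hx]
        simp [hne] at this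
      exact hL (hmono S3 L h3 hS3L)
    · by_contra hne
      rw [Finset.not_nonempty_iff_eq_empty] at hne
      have hS4L : S4 ⊆ L := by
        intro x hx
        by_cases hx3 : x ∈ S3
        · exact hsub (hi ▸ Finset.mem_inter.mpr ⟨hx3, hx⟩)
        · by_contra hxL
          have hxU : x ∈ S1 ∪ S2 := by
            rw [← hu]; exact Finset.mem_union_right _ hx
          have : x ∈ ((S1 ∪ S2) \ L) ∩ (S4 \ S3) := by
            simp [hxU, hxL, hx, hx3]
          simp [hne] at this
      exact hL (hmono S4 L h4 hS4L)
  · rintro ⟨U1, U2, hun, hint, hsplit⟩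
    refine ⟨U1 ∪ S1 ∩ S2, U2 ∪ S1 ∩ S2, ?_, ?_, ?_⟩
    · by_contra h3
      obtain ⟨M, hM3, hM, hMmax⟩ :=
        exists_maximal_losing W (Finset.univ \ (U1 ∪ S1 ∩ S2)).card _ le_rfl h3
      have hsubM : S1 ∩ S2 ⊆ M := (Finset.union_subset_iff.mp hM3).2
      obtain ⟨x, hx⟩ := (hsplit M hM hMmax hsubM).1
      simp only [Finset.mem_inter, Finset.mem_sdiff] at hx
      exact hx.1.2 (hM3 (Finset.mem_union_left _ hx.2))
    · by_contra h4
      obtain ⟨M, hM4, hM, hMmax⟩ :=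
        exists_maximal_losing W (Finset.univ \ (U2 ∪ S1 ∩ S2)).card _ le_rfl h4
      have hsubM : S1 ∩ S2 ⊆ M := (Finset.union_subset_iff.mp hM4).2
      obtain ⟨x, hx⟩ := (hsplit M hM hMmax hsubM).2
      simp only [Finset.mem_inter, Finset.mem_sdiff] at hx
      exact hx.1.2 (hM4 (Finset.mem_union_left _ hx.2))
    · intro p
      have hunp : p ∈ U1 ∨ p ∈ U2 ↔ p ∈ S1 ∨ p ∈ S2 := by
        rw [← Finset.mem_union, ← Finset.mem_union, hun]
      have hintp : ¬(p ∈ U1 ∧ p ∈ U2) := by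
        rw [← Finset.mem_inter, hint]; simp
      simp only [cnt, Finset.mem_union, Finset.mem_inter]
      by_cases hp1 : p ∈ S1 <;> by_cases hp2 : p ∈ S2 <;>
        by_cases hq1 : p ∈ U1 <;> by_cases hq2 : p ∈ U2 <;> simp_all
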